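/- Define φ(x) = [(-60/63)∫₀ˣ(1-t)(1+t)³dt + 12∫₀ˣ(1-t)(1+t)dt] / [(-60/63)(1+x)³ + 12(1+x)] for x ∈ [0,2]. Then the denominator is strictly positive on [0,2], φ(0) = 0, φ(2) = 0, φ'(0) = 1, φ'(2) = -1, and φ(x) > 0 for x ∈ (0,2). -/

import Mathlib

/-!
Write `φ = N / D`. Since `(1 - t) * (1 + t) ^ n = 2 * (1 + t) ^ n - (1 + t) ^ (n + 1)`, the
numerator integrates to `N x = 2/21 * x * (2 - x) * (58 + 24 x - 9 x² - 2 x³)`, whose cubic factor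
is at least `58 - 36 - 16 > 0` on `[0, 2]`; and `D x = 12 (1 + x) (1 - 5/63 (1 + x)²)` is positive
there because `(1 + x)² ≤ 9`. By the fundamental theorem of calculus `N' = (1 - x) D`, so at the
zeros `0` and `2` of `N` the quotient rule gives `φ' = N' / D = 1 - x`, i.e. `1` and `-1`.
-/

open intervalIntegral

theorem HasDerivAt.div_of_eq_zero {𝕜 : Type*} [NontriviallyNormedField 𝕜] {f g : 𝕜 → 𝕜}
    {f' x : 𝕜} (hf : HasDerivAt f f' x) (hg : DifferentiableAt 𝕜 g x) (hfx : f x = 0)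
    (hgx : g x ≠ 0) : HasDerivAt (fun y => f y / g y) (f' / g x) x :=
  (hf.fun_div hg.hasDerivAt hgx).congr_deriv (by rw [hfx, zero_mul, sub_zero]; field_simp)

theorem integral_one_sub_mul_one_add_pow (n : ℕ) (x : ℝ) :
    ∫ t in (0:ℝ)..x, (1 - t) * (1 + t) ^ n =
      2 * ((1 + x) ^ (n + 1) - 1) / (n + 1) - ((1 + x) ^ (n + 2) - 1) / (n + 2) := by
  have hderiv : ∀ t ∈ Set.uIcc (0:ℝ) x, HasDerivAt
      (fun t : ℝ => 2 * (1 + t) ^ (n + 1) / (n + 1) - (1 + t) ^ (n + 2) / (n + 2))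
      ((1 - t) * (1 + t) ^ n) t := by
    intro t _
    have hlin : HasDerivAt (fun t : ℝ => 1 + t) 1 t := (hasDerivAt_id t).const_add 1
    refine ((((hlin.pow (n + 1)).const_mul 2).div_const _).sub
      ((hlin.pow (n + 2)).div_const _)).congr_deriv ?_
    push_cast
    field_simp
    ring
  rw [integral_eq_sub_of_hasDerivAt hderiv ((by fun_prop : Continuous _).intervalIntegrable _ _)]
  ring

noncomputable def calabiNumerator (x : ℝ) : ℝ :=
  (-60 / 63) * (∫ t in (0:ℝ)..x, (1 - t) * (1 + t) ^ 3) +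
    12 * (∫ t in (0:ℝ)..x, (1 - t) * (1 + t))

noncomputable def calabiDenominator (x : ℝ) : ℝ :=
  (-60 / 63) * (1 + x) ^ 3 + 12 * (1 + x)

theorem calabiNumerator_eq (x : ℝ) :
    calabiNumerator x = 2 / 21 * x * (2 - x) * (58 + 24 * x - 9 * x ^ 2 - 2 * x ^ 3) := by
  have h3 := integral_one_sub_mul_one_add_pow 3 x
  have h1 := integral_one_sub_mul_one_add_pow 1 x
  simp only [pow_one] at h1
  rw [calabiNumerator, h3, h1]
  push_cast
  ring

theorem calabiNumerator_pos {x : ℝ} (hx : x ∈ Set.Ioo (0:ℝ) 2) : 0 < calabiNumerator x := by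
  obtain ⟨h0, h2⟩ := hx
  have hsq : x ^ 2 < 4 := by nlinarith
  have hcube : x ^ 3 < 8 := by nlinarith
  have hcubic : 0 < 58 + 24 * x - 9 * x ^ 2 - 2 * x ^ 3 := by linarith
  rw [calabiNumerator_eq]
  have : 0 < 2 - x := by linarith
  positivity

theorem calabiDenominator_pos {x : ℝ} (hx : x ∈ Set.Icc (0:ℝ) 2) : 0 < calabiDenominator x := by
  obtain ⟨h0, h2⟩ := hx
  have hsq : (1 + x) ^ 2 ≤ 9 := by nlinarith
  have hfactor : calabiDenominator x = 12 * (1 + x) * (1 - 5 / 63 * (1 + x) ^ 2) := by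
    rw [calabiDenominator]; ring
  rw [hfactor]
  have : 0 < 1 - 5 / 63 * (1 + x) ^ 2 := by linarith
  positivity

theorem hasDerivAt_calabiNumerator (x : ℝ) :
    HasDerivAt calabiNumerator ((1 - x) * calabiDenominator x) x := by
  have hcont3 : Continuous fun t : ℝ => (1 - t) * (1 + t) ^ 3 := by fun_prop
  have hcont1 : Continuous fun t : ℝ => (1 - t) * (1 + t) := by fun_prop
  refine ((((hcont3.integral_hasStrictDerivAt 0 x).hasDerivAt.const_mul _).add
    ((hcont1.integral_hasStrictDerivAt 0 x).hasDerivAt.const_mul _))).congr_deriv ?_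
  rw [calabiDenominator]
  ring

theorem hasDerivAt_calabiNumerator_div_of_eq_zero {x : ℝ} (hx : x ∈ Set.Icc (0:ℝ) 2)
    (hN : calabiNumerator x = 0) :
    HasDerivAt (fun y => calabiNumerator y / calabiDenominator y) (1 - x) x := by
  have hD := (calabiDenominator_pos hx).ne'
  refine ((hasDerivAt_calabiNumerator x).div_of_eq_zero ?_ hN hD).congr_deriv ?_
  · unfold calabiDenominator; fun_prop
  · field_simp

theorem stmt_16 (φ : ℝ → ℝ)
    (hφ : ∀ x, φ x =
      ((-60 / 63) * (∫ t in (0:ℝ)..x, (1 - t) * (1 + t) ^ 3) +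
          12 * (∫ t in (0:ℝ)..x, (1 - t) * (1 + t))) /
        ((-60 / 63) * (1 + x) ^ 3 + 12 * (1 + x))) :
    (∀ x ∈ Set.Icc (0:ℝ) 2, 0 < (-60 / 63) * (1 + x) ^ 3 + 12 * (1 + x)) ∧
      φ 0 = 0 ∧ φ 2 = 0 ∧ HasDerivAt φ 1 0 ∧ HasDerivAt φ (-1) 2 ∧
      ∀ x ∈ Set.Ioo (0:ℝ) 2, 0 < φ x := by
  have hφ' : φ = fun x => calabiNumerator x / calabiDenominator x := funext hφ
  have hN0 : calabiNumerator 0 = 0 := by rw [calabiNumerator_eq]; norm_num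
  have hN2 : calabiNumerator 2 = 0 := by rw [calabiNumerator_eq]; norm_num
  have h0 : (0:ℝ) ∈ Set.Icc 0 2 := by norm_num
  have h2 : (2:ℝ) ∈ Set.Icc 0 2 := by norm_num
  subst hφ'
  refine ⟨fun x hx => calabiDenominator_pos hx, by simp [hN0], by simp [hN2], ?_, ?_, ?_⟩
  · simpa using hasDerivAt_calabiNumerator_div_of_eq_zero h0 hN0
  · convert hasDerivAt_calabiNumerator_div_of_eq_zero h2 hN2 using 1
    norm_num
  · exact fun x hx =>
      div_pos (calabiNumerator_pos hx) (calabiDenominator_pos (Set.Ioo_subset_Icc_self hx))
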